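/- For f(x) = x − ⌊x⌋ − 1/2 and S_n(x) = Σ_{k=1}^n f(2^k x), the moment generating function satisfies, for every real z, ∫_0^1 e^{z S_n(x)} dx = Π_{p=2}^{n+1} cosh(z(1/2 − 1/2^p)) · Π_{p=n+2}^∞ cosh(z(1/2^{p−n} − 1/2^p)), the infinite product being convergent. -/

import Mathlib

open MeasureTheory

/-- The first Bernoulli polynomial of the fractional part, `f(x) = x - ⌊x⌋ - 1/2`. -/
noncomputable def bern (x : ℝ) : ℝ := x - ⌊x⌋ - 1 / 2

/-!
Put `G_n(a, z) = ∫₀¹ exp (a f(s) + z S_n(s)) ds`. Splitting `[0, 1]` into halves and substituting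
`s = t/2`, `s = (t + 1)/2`, the self-similarity `f(t/2) = f(t)/2 ∓ 1/4` (for `0 ≤ t < 1`) together
with `S_{n+1}(t/2) = f(t) + S_n(t)` gives `G_{n+1}(a, z) = cosh (a/4) G_n(a/2 + z, z)`.
Iterating from `a = 0` yields the finite product times `∫₀¹ exp (b f)` with `b = 2z(1 - 2⁻ⁿ)`.
The same recursion at `z = 0` expands `∫₀¹ exp (b f)` as `∏ⱼ cosh (b/2^{j+2})`: the remainder
`∫₀¹ exp (b f / 2^N)` tends to `1` by continuity of the integral in its parameter.
-/

open Real Filter Topology Set intervalIntegral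

lemma bern_eq_fract (x : ℝ) : bern x = Int.fract x - 1 / 2 := rfl

lemma bern_periodic : Function.Periodic bern 1 := fun x => by
  simp only [bern_eq_fract, Int.fract_add_one]

lemma bern_of_mem_Ico {x : ℝ} (hx : x ∈ Ico 0 1) : bern x = x - 1 / 2 := by
  rw [bern_eq_fract, Int.fract_eq_self.2 hx]

lemma abs_bern_le (x : ℝ) : |bern x| ≤ 1 / 2 := by
  rw [bern_eq_fract, abs_le]
  constructor <;> linarith [Int.fract_nonneg x, Int.fract_lt_one x]

@[fun_prop]
lemma measurable_bern : Measurable bern := by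
  unfold bern; fun_prop

lemma bern_div_two {t : ℝ} (ht : t ∈ Ico 0 1) : bern (t / 2) = bern t / 2 - 1 / 4 := by
  rw [bern_of_mem_Ico ht, bern_of_mem_Ico ⟨by linarith [ht.1], by linarith [ht.2]⟩]
  ring

lemma bern_div_two_add_half {t : ℝ} (ht : t ∈ Ico 0 1) :
    bern (t / 2 + 1 / 2) = bern t / 2 + 1 / 4 := by
  rw [bern_of_mem_Ico ht, bern_of_mem_Ico ⟨by linarith [ht.1], by linarith [ht.2]⟩]
  ring

noncomputable def bernSum (n : ℕ) (x : ℝ) : ℝ := ∑ k ∈ Finset.range n, bern (2 ^ (k + 1) * x)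

lemma sum_Icc_bern_eq_bernSum (n : ℕ) (x : ℝ) :
    ∑ k ∈ Finset.Icc 1 n, bern (2 ^ k * x) = bernSum n x := by
  rw [bernSum, ← Finset.Ico_add_one_right_eq_Icc, Finset.sum_Ico_eq_sum_range]
  simp only [add_tsub_cancel_right, add_comm 1]

lemma bernSum_zero : bernSum 0 = 0 := by
  ext x; simp [bernSum]

lemma bernSum_periodic (n : ℕ) : Function.Periodic (bernSum n) 1 := fun x =>
  Finset.sum_congr rfl fun k _ => by
    simpa [mul_add] using bern_periodic.nat_mul (2 ^ (k + 1)) (2 ^ (k + 1) * x)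

lemma bernSum_succ_div_two (n : ℕ) (t : ℝ) : bernSum (n + 1) (t / 2) = bern t + bernSum n t := by
  rw [bernSum, Finset.sum_range_succ', add_comm, bernSum]
  congr 1
  · rw [zero_add, pow_one, mul_div_cancel₀ t two_ne_zero]
  · exact Finset.sum_congr rfl fun k _ => by
      rw [pow_succ, mul_assoc, mul_div_cancel₀ t two_ne_zero]

lemma bernSum_succ_div_two_add_half (n : ℕ) (t : ℝ) :
    bernSum (n + 1) (t / 2 + 1 / 2) = bern t + bernSum n t := by
  rw [show t / 2 + 1 / 2 = (t + 1) / 2 by ring, bernSum_succ_div_two, bern_periodic,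
    bernSum_periodic]

lemma abs_bernSum_le (n : ℕ) (x : ℝ) : |bernSum n x| ≤ n / 2 := by
  calc |bernSum n x| ≤ ∑ k ∈ Finset.range n, |bern (2 ^ (k + 1) * x)| :=
        Finset.abs_sum_le_sum_abs _ _
    _ ≤ ∑ k ∈ Finset.range n, (1 / 2 : ℝ) := Finset.sum_le_sum fun k _ => abs_bern_le _
    _ = n / 2 := by simp [div_eq_mul_inv]

@[fun_prop]
lemma measurable_bernSum (n : ℕ) : Measurable (bernSum n) :=
  Finset.measurable_sum _ fun _ _ => measurable_bern.comp (measurable_const_mul _)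

theorem integral_zero_one_eq_halves {E : Type*} [NormedAddCommGroup E] [NormedSpace ℝ E]
    {f : ℝ → E} (hf : IntervalIntegrable f volume 0 1) :
    ∫ x in (0 : ℝ)..1, f x =
      (2 : ℝ)⁻¹ • ((∫ t in (0 : ℝ)..1, f (t / 2)) + ∫ t in (0 : ℝ)..1, f (t / 2 + 1 / 2)) := by
  have hsub : ∀ {u v : ℝ}, u ∈ Icc (0 : ℝ) 1 → v ∈ Icc (0 : ℝ) 1 →
      IntervalIntegrable f volume u v :=
    fun hu hv => hf.mono_set (uIcc_subset_uIcc (by simpa using hu) (by simpa using hv))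
  rw [← integral_add_adjacent_intervals (b := 1 / 2) (hsub (by norm_num) (by norm_num))
    (hsub (by norm_num) (by norm_num)), integral_comp_div _ two_ne_zero,
    integral_comp_div_add _ two_ne_zero]
  norm_num [smul_smul]

noncomputable def jointMgf (n : ℕ) (a z : ℝ) : ℝ :=
  ∫ s in (0 : ℝ)..1, exp (a * bern s + z * bernSum n s)

noncomputable def bernMgf (a : ℝ) : ℝ := ∫ s in (0 : ℝ)..1, exp (a * bern s)

lemma jointMgf_zero (a z : ℝ) : jointMgf 0 a z = bernMgf a := by
  simp [jointMgf, bernMgf, bernSum_zero]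

lemma jointMgf_zero_right (n : ℕ) (a : ℝ) : jointMgf n a 0 = bernMgf a := by
  simp [jointMgf, bernMgf]

lemma abs_mul_bern_add_mul_bernSum_le (n : ℕ) (a z s : ℝ) :
    |a * bern s + z * bernSum n s| ≤ |a| / 2 + |z| * (n / 2) := by
  have ha : |a * bern s| ≤ |a| / 2 := by
    rw [abs_mul]; nlinarith [abs_bern_le s, abs_nonneg a]
  have hz : |z * bernSum n s| ≤ |z| * (n / 2) := by
    rw [abs_mul]; exact mul_le_mul_of_nonneg_left (abs_bernSum_le n s) (abs_nonneg z)
  exact (abs_add_le _ _).trans (add_le_add ha hz)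

lemma intervalIntegrable_exp_mul_bern_add_mul_bernSum (n : ℕ) (a z u v : ℝ) :
    IntervalIntegrable (fun s => exp (a * bern s + z * bernSum n s)) volume u v := by
  refine (intervalIntegrable_const (c := exp (|a| / 2 + |z| * (n / 2)))).mono_fun
    (by fun_prop) ?_
  refine Eventually.of_forall fun s => ?_
  simp only [norm_eq_abs, abs_exp]
  exact exp_le_exp.2 ((le_abs_self _).trans (abs_mul_bern_add_mul_bernSum_le n a z s))

lemma jointMgf_succ (n : ℕ) (a z : ℝ) :
    jointMgf (n + 1) a z = cosh (a / 4) * jointMgf n (a / 2 + z) z := by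
  have hleft : ∫ t in (0 : ℝ)..1, exp (a * bern (t / 2) + z * bernSum (n + 1) (t / 2)) =
      exp (-(a / 4)) * jointMgf n (a / 2 + z) z := by
    rw [jointMgf, ← intervalIntegral.integral_const_mul]
    refine integral_congr_Ioo_of_le zero_le_one fun t ht => ?_
    rw [bern_div_two (Ioo_subset_Ico_self ht), bernSum_succ_div_two, ← exp_add]
    ring_nf
  have hright : ∫ t in (0 : ℝ)..1,
      exp (a * bern (t / 2 + 1 / 2) + z * bernSum (n + 1) (t / 2 + 1 / 2)) =
        exp (a / 4) * jointMgf n (a / 2 + z) z := by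
    rw [jointMgf, ← intervalIntegral.integral_const_mul]
    refine integral_congr_Ioo_of_le zero_le_one fun t ht => ?_
    rw [bern_div_two_add_half (Ioo_subset_Ico_self ht), bernSum_succ_div_two_add_half, ← exp_add]
    ring_nf
  rw [jointMgf, integral_zero_one_eq_halves (intervalIntegrable_exp_mul_bern_add_mul_bernSum ..),
    hleft, hright, cosh_eq, smul_eq_mul]
  ring

lemma jointMgf_eq_prod_mul (n : ℕ) (a z : ℝ) :
    jointMgf n a z =
      (∏ k ∈ Finset.range n, cosh ((fun b => b / 2 + z)^[k] a / 4)) *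
        bernMgf ((fun b => b / 2 + z)^[n] a) := by
  induction n generalizing a with
  | zero => simp [jointMgf_zero]
  | succ n ih =>
    rw [jointMgf_succ, ih, Finset.prod_range_succ', Function.iterate_succ_apply]
    simp only [Function.iterate_succ_apply, Function.iterate_zero_apply]
    ring

lemma iterate_half_add_zero (z : ℝ) (k : ℕ) :
    (fun b => b / 2 + z)^[k] 0 = 2 * z * (1 - 1 / 2 ^ k) := by
  induction k with
  | zero => simp
  | succ k ih =>
    rw [Function.iterate_succ_apply', ih, pow_succ]
    field_simp
    ring

lemma bernMgf_eq_cosh_mul (b : ℝ) : bernMgf b = cosh (b / 4) * bernMgf (b / 2) := by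
  simpa [jointMgf_zero_right] using jointMgf_succ 0 b 0

lemma jointMgf_eq_prod_cosh_mul (n : ℕ) (z : ℝ) :
    jointMgf n 0 z =
      (∏ k ∈ Finset.range (n + 1), cosh (z * (1 / 2 - 1 / 2 ^ (k + 1)))) *
        bernMgf (z * (1 - 1 / 2 ^ n)) := by
  have hquarter : ∀ k : ℕ, 2 * z * (1 - 1 / 2 ^ k) / 4 = z * (1 / 2 - 1 / 2 ^ (k + 1)) := by
    intro k
    rw [pow_succ]
    field_simp
    ring
  rw [jointMgf_eq_prod_mul, bernMgf_eq_cosh_mul, Finset.prod_range_succ]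
  simp only [iterate_half_add_zero, hquarter]
  rw [show 2 * z * (1 - 1 / 2 ^ n) / 2 = z * (1 - 1 / 2 ^ n) by ring, mul_assoc]

lemma bernMgf_eq_prod_mul (b : ℝ) (N : ℕ) :
    bernMgf b = (∏ j ∈ Finset.range N, cosh (b / 2 ^ (j + 2))) * bernMgf (b / 2 ^ N) := by
  induction N with
  | zero => simp
  | succ N ih =>
    rw [ih, bernMgf_eq_cosh_mul (b / 2 ^ N), Finset.prod_range_succ]
    ring_nf

lemma bernMgf_zero : bernMgf 0 = 1 := by simp [bernMgf]

lemma bernMgf_pos (b : ℝ) : 0 < bernMgf b :=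
  intervalIntegral_pos_of_pos_on
    (by simpa using intervalIntegrable_exp_mul_bern_add_mul_bernSum 0 b 0 0 1)
    (fun _ _ => exp_pos _) one_pos

lemma continuous_bernMgf : Continuous bernMgf := by
  refine continuous_iff_continuousAt.2 fun b₀ => ?_
  refine continuousAt_of_dominated_interval (bound := fun _ => exp ((|b₀| + 1) / 2)) ?_ ?_
    intervalIntegrable_const ?_
  · exact Eventually.of_forall fun b => by fun_prop
  · filter_upwards [Metric.ball_mem_nhds b₀ one_pos] with b hb
    refine Eventually.of_forall fun s _ => ?_
    have hb' : |b| ≤ |b₀| + 1 := by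
      rw [Metric.mem_ball, Real.dist_eq] at hb
      linarith [abs_sub_abs_le_abs_sub b b₀]
    rw [norm_eq_abs, abs_exp, exp_le_exp]
    calc b * bern s ≤ |b| * |bern s| := (le_abs_self _).trans (abs_mul _ _).le
      _ ≤ (|b₀| + 1) * (1 / 2) := mul_le_mul hb' (abs_bern_le s) (abs_nonneg _) (by positivity)
      _ = (|b₀| + 1) / 2 := by ring
  · exact Eventually.of_forall fun s _ => by fun_prop

lemma multipliable_cosh_of_summable_sq {ι : Type*} {x : ι → ℝ} (hx : Summable fun i => x i ^ 2) :
    Multipliable fun i => cosh (x i) :=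
  multipliable_of_summable_log (fun i => cosh_pos _) <|
    (hx.div_const 2).of_nonneg_of_le (fun i => log_nonneg (one_le_cosh _)) fun i => by
      simpa [log_exp] using log_le_log (cosh_pos _) (cosh_le_exp_half_sq (x i))

theorem hasProd_cosh_div_two_pow (b : ℝ) :
    HasProd (fun j : ℕ => cosh (b / 2 ^ (j + 2))) (bernMgf b) := by
  have hsq : Summable fun j : ℕ => (b / 2 ^ (j + 2)) ^ 2 := by
    refine ((summable_geometric_of_lt_one (by norm_num) (by norm_num : (1 / 4 : ℝ) < 1)).mul_left
      ((b / 4) ^ 2)).congr fun j => ?_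
    rw [show (4 : ℝ) = 2 ^ 2 by norm_num, one_div_pow, ← pow_mul]
    field_simp
    ring
  rw [(multipliable_cosh_of_summable_sq hsq).hasProd_iff_tendsto_nat]
  have hlim : Tendsto (fun N : ℕ => bernMgf (b / 2 ^ N)) atTop (𝓝 1) := by
    rw [← bernMgf_zero]
    refine continuous_bernMgf.continuousAt.tendsto.comp ?_
    exact tendsto_const_nhds.div_atTop (tendsto_pow_atTop_atTop_of_one_lt one_lt_two)
  have hquot := tendsto_const_nhds (x := bernMgf b) |>.div hlim one_ne_zero
  rw [div_one] at hquot
  refine hquot.congr fun N => ?_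
  rw [Pi.div_apply, div_eq_iff (bernMgf_pos _).ne', ← bernMgf_eq_prod_mul]

/-- For `f(x) = x - ⌊x⌋ - 1/2` and `S_n(x) = ∑_{k=1}^n f(2^k x)`, for every real
`z`, `∫_0^1 e^{z S_n(x)} dx = ∏_{p=2}^{n+1} cosh (z (1/2 - 1/2^p)) ·
∏_{p=n+2}^∞ cosh (z (1/2^(p-n) - 1/2^p))`, the infinite product being convergent. -/
theorem mgf_bern_sum (n : ℕ) (z : ℝ) :
    Multipliable (fun j : ℕ => Real.cosh (z * (1 / 2 ^ (j + 2) - 1 / 2 ^ (n + 2 + j)))) ∧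
    ∫ x in (0 : ℝ)..1, Real.exp (z * ∑ k ∈ Finset.Icc 1 n, bern (2 ^ k * x)) =
      (∏ p ∈ Finset.Icc 2 (n + 1), Real.cosh (z * (1 / 2 - 1 / 2 ^ p))) *
        ∏' j : ℕ, Real.cosh (z * (1 / 2 ^ (j + 2) - 1 / 2 ^ (n + 2 + j))) := by
  set w := z * (1 - 1 / 2 ^ n) with hw
  have htail : ∀ j : ℕ, z * (1 / 2 ^ (j + 2) - 1 / 2 ^ (n + 2 + j)) = w / 2 ^ (j + 2) := by
    intro j
    rw [hw, show n + 2 + j = n + (j + 2) by ring, pow_add]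
    field_simp
    ring
  have hprod := hasProd_cosh_div_two_pow w
  simp only [htail]
  refine ⟨hprod.multipliable, ?_⟩
  have hhead : ∏ p ∈ Finset.Icc 2 (n + 1), cosh (z * (1 / 2 - 1 / 2 ^ p)) =
      ∏ k ∈ Finset.range (n + 1), cosh (z * (1 / 2 - 1 / 2 ^ (k + 1))) := by
    -- the `k = 0` factor on the right is `cosh 0 = 1`
    rw [Finset.prod_range_succ', ← Finset.Ico_add_one_right_eq_Icc, Finset.prod_Ico_eq_prod_range,
      show n + 1 + 1 - 2 = n by omega]
    simp [add_comm 2]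
  calc ∫ x in (0 : ℝ)..1, exp (z * ∑ k ∈ Finset.Icc 1 n, bern (2 ^ k * x))
      = jointMgf n 0 z := by simp only [jointMgf, sum_Icc_bern_eq_bernSum, zero_mul, zero_add]
    _ = (∏ k ∈ Finset.range (n + 1), cosh (z * (1 / 2 - 1 / 2 ^ (k + 1)))) * bernMgf w :=
      jointMgf_eq_prod_cosh_mul n z
    _ = _ := by rw [hhead, hprod.tprod_eq]
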